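/- arXiv:2212.00494 — 5 statements merged into one kernel-verified Lean document; each statement's English description precedes it below -/
import Mathlib

section
/- Let α, β, λ₁, λ₂, λ₃ be real numbers with α ≠ 0. If the following equations hold: -(α²+ (3/4)β²)λ₂ + (α²+(1/2)β²)λ₃ = 0; (α²+(3/4)β²)λ₁ - (1/4)αβλ₂ = 0; -α(α²+(1/2)β²)λ₁ + β(α²+(1/2)β²)λ₂ - (3/4)α²βλ₃ = 0; αβλ₁ - (α²+β²)λ₃ = 0; -β((5/4)α²+(1/2)β²)λ₁ + (1/2)α(α²+β²)λ₂ - (1/2)α(α²+(1/2)β²)λ₃ = 0; (3/2)αβλ₁ - (α²+(1/2)β²)λ₂ = 0, then λ₁ = λ₂ = λ₃ = 0. -/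
theorem stmt_0_general (α β l1 l2 l3 : ℝ) (hα : α ≠ 0)
    (h2 : (α^2 + (3/4)*β^2)*l1 - (1/4)*α*β*l2 = 0)
    (h4 : α*β*l1 - (α^2 + β^2)*l3 = 0)
    (h6 : (3/2)*α*β*l1 - (α^2 + (1/2)*β^2)*l2 = 0) :
    l1 = 0 ∧ l2 = 0 ∧ l3 = 0 := by
  -- `h2` and `h6` are a 2 × 2 system in `l1, l2`; eliminating `l2` leaves its determinant,
  -- which is positive since `α ≠ 0`.
  have hl1 : l1 = 0 := by
    have hdet : (α^4 + (7/8)*α^2*β^2 + (3/8)*β^4) * l1 = 0 := by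
      linear_combination (α^2 + (1/2)*β^2) * h2 - (1/4)*α*β * h6
    exact (mul_eq_zero_iff_left (by positivity)).mp hdet
  have hl2 : l2 = 0 := by
    have h : (α^2 + (1/2)*β^2) * l2 = 0 := by linear_combination -h6 + (3/2)*α*β * hl1
    exact (mul_eq_zero_iff_left (by positivity)).mp h
  have hl3 : l3 = 0 := by
    have h : (α^2 + β^2) * l3 = 0 := by linear_combination -h4 + α*β * hl1
    exact (mul_eq_zero_iff_left (by positivity)).mp h
  exact ⟨hl1, hl2, hl3⟩

theorem stmt_0 (α β l1 l2 l3 : ℝ) (hα : α ≠ 0)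
    (h1 : -(α^2 + (3/4)*β^2)*l2 + (α^2 + (1/2)*β^2)*l3 = 0)
    (h2 : (α^2 + (3/4)*β^2)*l1 - (1/4)*α*β*l2 = 0)
    (h3 : -α*(α^2 + (1/2)*β^2)*l1 + β*(α^2 + (1/2)*β^2)*l2 - (3/4)*α^2*β*l3 = 0)
    (h4 : α*β*l1 - (α^2 + β^2)*l3 = 0)
    (h5 : -β*((5/4)*α^2 + (1/2)*β^2)*l1 + (1/2)*α*(α^2 + β^2)*l2 - (1/2)*α*(α^2 + (1/2)*β^2)*l3 = 0)
    (h6 : (3/2)*α*β*l1 - (α^2 + (1/2)*β^2)*l2 = 0) :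
    l1 = 0 ∧ l2 = 0 ∧ l3 = 0 :=
  stmt_0_general α β l1 l2 l3 hα h2 h4 h6
end

section
/- Let α, β, λ₁, λ₂, λ₃ be real numbers with α ≠ 0. If the following equations hold: -(α²+(1/2)β²)λ₂ + α²λ₃ = 0; (α²+(1/2)β²)λ₁ - αβλ₂ = 0; -α³λ₁ + β³λ₂ = 0; βλ₁ + αλ₃ = 0; β((1/2)α²-β²)λ₁ + (1/2)α³λ₂ + (1/2)α(α²-β²)λ₃ = 0; (β²-α²)λ₂ = 0, then λ₁ = λ₂ = λ₃ = 0. -/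
open Matrix

noncomputable def collineationMatrix (α β : ℝ) : Matrix (Fin 3) (Fin 3) ℝ :=
  !![0, -(α^2 + (1/2)*β^2), α^2;
     α^2 + (1/2)*β^2, -α*β, 0;
     β, 0, α]

theorem det_collineationMatrix (α β : ℝ) :
    (collineationMatrix α β).det = α * ((α^2 + (1/2)*β^2)^2 + α^2*β^2) := by
  rw [collineationMatrix, det_fin_three]
  simp only [of_apply, cons_val', cons_val_zero, cons_val_one, cons_val_two, empty_val',
    cons_val_fin_one, head_cons, tail_cons, head_fin_const]
  ring

theorem det_collineationMatrix_ne_zero {α : ℝ} (hα : α ≠ 0) (β : ℝ) :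
    (collineationMatrix α β).det ≠ 0 := by
  rw [det_collineationMatrix]
  positivity

theorem stmt_1_general (α β l1 l2 l3 : ℝ) (hα : α ≠ 0)
    (h1 : -(α^2 + (1/2)*β^2)*l2 + α^2*l3 = 0)
    (h2 : (α^2 + (1/2)*β^2)*l1 - α*β*l2 = 0)
    (h4 : β*l1 + α*l3 = 0) :
    l1 = 0 ∧ l2 = 0 ∧ l3 = 0 := by
  have hsol : collineationMatrix α β *ᵥ ![l1, l2, l3] = 0 := by
    ext i
    fin_cases i
    · simpa [collineationMatrix, mulVec, vec3_dotProduct, sub_eq_add_neg] using h1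
    · simpa [collineationMatrix, mulVec, vec3_dotProduct, sub_eq_add_neg] using h2
    · simpa [collineationMatrix, mulVec, vec3_dotProduct, sub_eq_add_neg] using h4
  have hzero := eq_zero_of_mulVec_eq_zero (det_collineationMatrix_ne_zero hα β) hsol
  exact ⟨congr_fun hzero 0, congr_fun hzero 1, congr_fun hzero 2⟩

theorem stmt_1 (α β l1 l2 l3 : ℝ) (hα : α ≠ 0)
    (h1 : -(α^2 + (1/2)*β^2)*l2 + α^2*l3 = 0)
    (h2 : (α^2 + (1/2)*β^2)*l1 - α*β*l2 = 0)
    (h3 : -α^3*l1 + β^3*l2 = 0)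
    (h4 : β*l1 + α*l3 = 0)
    (h5 : β*((1/2)*α^2 - β^2)*l1 + (1/2)*α^3*l2 + (1/2)*α*(α^2 - β^2)*l3 = 0)
    (h6 : (β^2 - α^2)*l2 = 0) :
    l1 = 0 ∧ l2 = 0 ∧ l3 = 0 :=
  stmt_1_general α β l1 l2 l3 hα h1 h2 h4
end

section
/- Let α, β, γ, λ₁, λ₂, λ₃ be real numbers with γ ≠ 0, α ≠ 0, β ≠ 0. Suppose (2γ²+αβ)λ₂ + γ(α−2β)λ₃ = 0 and (2β²+γ²)λ₂ + βγλ₃ = 0 and γ(γ²+(1/2)αβ)λ₁ = 0 and β(γ²+αβ)λ₁ = 0 and αβγλ₁ = 0. Then λ₁ = 0, and moreover: if α ≠ 4β then λ₂ = λ₃ = 0, while if α = 4β then λ₃ = −((2β²+γ²)/(βγ))·λ₂. -/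
/-! The conditions on `λ₁` force `λ₁ = 0` as soon as `αβγ ≠ 0`. The remaining two equations form a
homogeneous linear system in `(λ₂, λ₃)` whose determinant is `-γ(α - 4β)(β² + γ²)`; it is invertible
exactly when `α ≠ 4β`, and otherwise the second equation alone expresses `λ₃` through `λ₂`. -/

theorem eq_zero_and_eq_zero_of_linear_system {R : Type*} [CommRing R] [NoZeroDivisors R]
    {a b c d x y : R} (h₁ : a * x + b * y = 0) (h₂ : c * x + d * y = 0)
    (hdet : a * d - b * c ≠ 0) : x = 0 ∧ y = 0 := by
  have hx : (a * d - b * c) * x = 0 := by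
    linear_combination d * h₁ - b * h₂
  have hy : (a * d - b * c) * y = 0 := by
    linear_combination a * h₂ - c * h₁
  exact ⟨(mul_eq_zero.1 hx).resolve_left hdet, (mul_eq_zero.1 hy).resolve_left hdet⟩

theorem eq_neg_div_mul_of_add_eq_zero {K : Type*} [Field K] {c d x y : K}
    (h : c * x + d * y = 0) (hd : d ≠ 0) : y = -(c / d) * x := by
  field_simp
  linear_combination h

theorem kobayashiNomizu_det_eq (α β γ : ℝ) :
    (2*γ^2 + α*β) * (β*γ) - γ*(α - 2*β) * (2*β^2 + γ^2) = -γ * (α - 4*β) * (β^2 + γ^2) := by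
  ring

theorem kobayashiNomizu_det_ne_zero {α β γ : ℝ} (hγ : γ ≠ 0) (hαβ : α ≠ 4*β) :
    -γ * (α - 4*β) * (β^2 + γ^2) ≠ 0 := by
  have hsq : β^2 + γ^2 ≠ 0 := by positivity
  exact mul_ne_zero (mul_ne_zero (neg_ne_zero.2 hγ) (sub_ne_zero.2 hαβ)) hsq

theorem stmt_3_general (α β γ l1 l2 l3 : ℝ) (hγ : γ ≠ 0) (hα : α ≠ 0) (hβ : β ≠ 0)
    (h1 : (2*γ^2 + α*β)*l2 + γ*(α - 2*β)*l3 = 0)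
    (h2 : (2*β^2 + γ^2)*l2 + β*γ*l3 = 0)
    (h5 : α*β*γ*l1 = 0) :
    l1 = 0 ∧ (α ≠ 4*β → l2 = 0 ∧ l3 = 0) ∧
      (α = 4*β → l3 = -((2*β^2 + γ^2)/(β*γ))*l2) := by
  refine ⟨by simpa [hα, hβ, hγ] using h5, fun hαβ => ?_, fun _ => ?_⟩
  · refine eq_zero_and_eq_zero_of_linear_system h1 h2 ?_
    rw [kobayashiNomizu_det_eq]
    exact kobayashiNomizu_det_ne_zero hγ hαβ
  · exact eq_neg_div_mul_of_add_eq_zero h2 (mul_ne_zero hβ hγ)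

theorem stmt_3 (α β γ l1 l2 l3 : ℝ) (hγ : γ ≠ 0) (hα : α ≠ 0) (hβ : β ≠ 0)
    (h1 : (2*γ^2 + α*β)*l2 + γ*(α - 2*β)*l3 = 0)
    (h2 : (2*β^2 + γ^2)*l2 + β*γ*l3 = 0)
    (h3 : γ*(γ^2 + (1/2)*α*β)*l1 = 0)
    (h4 : β*(γ^2 + α*β)*l1 = 0)
    (h5 : α*β*γ*l1 = 0) :
    l1 = 0 ∧ (α ≠ 4*β → l2 = 0 ∧ l3 = 0) ∧
      (α = 4*β → l3 = -((2*β^2 + γ^2)/(β*γ))*l2) :=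
  stmt_3_general α β γ l1 l2 l3 hγ hα hβ h1 h2 h5
end

section
/- Let α, β, λ₁, λ₂, λ₃ be real numbers with α ≠ 0, β ≠ 0. Suppose (1+(1/2)α(β−2))λ₂ + (β−α/2)λ₃ = 0 and (1/2+β(β−2))λ₂ − (1/2)βλ₃ = 0 and λ₁ = 0. If α = 4β and β ≠ 1, then λ₃ = ((α²−8α+8)/(2α))·λ₂. If β = 1 and α = 2, then λ₂ + λ₃ = 0. If α ≠ 4β and β ≠ 1, then λ₂ = λ₃ = 0. -/
/-!
The two equations form a homogeneous linear system in (λ₂, λ₃) whose determinant factors as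
(α/4 − β)(β − 1)². Off the zero set of that factor only the trivial solution exists; on
α = 4β the second equation alone expresses λ₃ through λ₂, and at (α, β) = (2, 1) the first
equation is void while the second reads λ₂ + λ₃ = 0.
-/

theorem eq_zero_of_two_by_two_det_ne_zero {K : Type*} [Field K] {a b c d x y : K}
    (hdet : a * d - b * c ≠ 0) (h₁ : a * x + b * y = 0) (h₂ : c * x + d * y = 0) :
    x = 0 ∧ y = 0 := by
  have hx : (a * d - b * c) * x = 0 := by linear_combination d * h₁ - b * h₂
  have hy : (a * d - b * c) * y = 0 := by linear_combination a * h₂ - c * h₁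
  exact ⟨(mul_eq_zero.mp hx).resolve_left hdet, (mul_eq_zero.mp hy).resolve_left hdet⟩

theorem g4_ricci_det_eq (α β : ℝ) :
    (1 + (1/2)*α*(β - 2)) * (-(1/2)*β) - (β - α/2) * (1/2 + β*(β - 2)) =
      ((1/4)*α - β) * (β - 1)^2 := by
  ring

theorem stmt_11_general (α β l2 l3 : ℝ) (hα : α ≠ 0)
    (h1 : (1 + (1/2)*α*(β - 2))*l2 + (β - α/2)*l3 = 0)
    (h2 : (1/2 + β*(β - 2))*l2 - (1/2)*β*l3 = 0) :
    (α = 4*β → β ≠ 1 → l3 = ((α^2 - 8*α + 8)/(2*α))*l2) ∧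
    (β = 1 → α = 2 → l2 + l3 = 0) ∧
    (α ≠ 4*β → β ≠ 1 → l2 = 0 ∧ l3 = 0) := by
  refine ⟨fun hαβ _ => ?_, fun hβ1 hα2 => ?_, fun hαβ hβ1 => ?_⟩
  · rw [div_mul_eq_mul_div, eq_div_iff (mul_ne_zero two_ne_zero hα), hαβ]
    linear_combination (-16) * h2
  · subst hβ1 hα2
    linear_combination (-2) * h2
  · have hdet : (1 + (1/2)*α*(β - 2)) * (-(1/2)*β) - (β - α/2) * (1/2 + β*(β - 2)) ≠ 0 := by
      rw [g4_ricci_det_eq]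
      refine mul_ne_zero (fun h => hαβ ?_) (pow_ne_zero 2 (sub_ne_zero.mpr hβ1))
      linear_combination 4 * h
    exact eq_zero_of_two_by_two_det_ne_zero hdet h1 (by linear_combination h2)

theorem stmt_11 (α β l1 l2 l3 : ℝ) (hα : α ≠ 0) (hβ : β ≠ 0)
    (h1 : (1 + (1/2)*α*(β - 2))*l2 + (β - α/2)*l3 = 0)
    (h2 : (1/2 + β*(β - 2))*l2 - (1/2)*β*l3 = 0)
    (h3 : l1 = 0) :
    (α = 4*β → β ≠ 1 → l3 = ((α^2 - 8*α + 8)/(2*α))*l2) ∧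
    (β = 1 → α = 2 → l2 + l3 = 0) ∧
    (α ≠ 4*β → β ≠ 1 → l2 = 0 ∧ l3 = 0) :=
  stmt_11_general α β l2 l3 hα h1 h2
end

section
/- Let β, δ, γ, λ₁, λ₂, λ₃ be real numbers with δ ≠ 0 and β ≠ 0. Suppose λ₂ = λ₃, βλ₁ + δλ₃ = 0, and γλ₁ = 0, together with βδγλ₁ − β²γλ₂ + (βγ(2γ+β)+δ²γ)λ₃ = 0. If γ ≠ 0 then λ₁ = λ₂ = λ₃ = 0; if γ = 0 then λ₂ = λ₃ = −(β/δ)λ₁. -/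
theorem stmt_15_general (β δ γ l1 l2 l3 : ℝ) (hδ : δ ≠ 0)
    (h1 : l2 = l3)
    (h2 : β*l1 + δ*l3 = 0)
    (h3 : γ*l1 = 0) :
    (γ ≠ 0 → l1 = 0 ∧ l2 = 0 ∧ l3 = 0) ∧
    (γ = 0 → l2 = -(β/δ)*l1 ∧ l3 = -(β/δ)*l1) := by
  have hl3 : l3 = -(β/δ)*l1 := by field_simp; linarith
  subst h1
  refine ⟨fun hγ => ?_, fun _ => ⟨hl3, hl3⟩⟩
  have hl1 : l1 = 0 := (mul_eq_zero.mp h3).resolve_left hγ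
  simp [hl3, hl1]

theorem stmt_15 (β δ γ l1 l2 l3 : ℝ) (hδ : δ ≠ 0) (hβ : β ≠ 0)
    (h1 : l2 = l3)
    (h2 : β*l1 + δ*l3 = 0)
    (h3 : γ*l1 = 0)
    (h4 : β*δ*γ*l1 - β^2*γ*l2 + (β*γ*(2*γ + β) + δ^2*γ)*l3 = 0) :
    (γ ≠ 0 → l1 = 0 ∧ l2 = 0 ∧ l3 = 0) ∧
    (γ = 0 → l2 = -(β/δ)*l1 ∧ l3 = -(β/δ)*l1) :=
  stmt_15_general β δ γ l1 l2 l3 hδ h1 h2 h3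
end
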